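/- Let H be obtained from a fixed binary matrix H̃ of rank n−η (with columns indexed by a set of size n) by appending k rows drawn independently and uniformly at random from F₂ⁿ. Then the conditional probability that Rank(H) = (n−η)+ω equals ζ(η,ω,k) = S(ω, k−ω)·2^{−(k−ω)(η−ω)}·∏_{i=1}^{ω}(1 − 2^{−(η+1−i)}) for each 0 ≤ ω ≤ min{η,k}, where S(ω,l) = Σ_{0 ≤ i₁ ≤ ⋯ ≤ i_l ≤ ω} 2^{-(i₁+⋯+i_l)}. -/

import Mathlib

/-- `S ω l` = sum over all nondecreasing tuples `0 ≤ i₁ ≤ ⋯ ≤ i_l ≤ ω`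
of `2^{-(i₁+⋯+i_l)}`, with `S ω 0 = 1`. -/
noncomputable def S (ω l : ℕ) : ℝ := by
  classical
  exact ∑ f ∈ Finset.univ.filter (fun f : Fin l → Fin (ω + 1) => Monotone f),
    (1 / 2 : ℝ) ^ (∑ i, (f i : ℕ))

/-- The conditional Kovalenko rank distribution value. -/
noncomputable def zeta (η ω k : ℕ) : ℝ :=
  S ω (k - ω) * (1 / 2 : ℝ) ^ ((k - ω) * (η - ω)) *
    ∏ i ∈ Finset.Icc 1 ω, (1 - (1 / 2 : ℝ) ^ (η + 1 - i))

/-!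
Let `W` be the row space of `H̃` in `V = F₂ⁿ`. Appending rows `R₁, …, R_k` raises the rank by the
dimension of the span of their images in `V ⧸ W`, a space of dimension `η`, and reduction modulo
`W` pushes the uniform distribution on `Vᵏ` forward to the uniform distribution on `(V ⧸ W)ᵏ`.
So the probability is `N_k(ω) / 2^{kη}`, where `N_k(ω)` counts the `k`-tuples in `F₂^η` spanning an
`ω`-dimensional subspace. A new vector either lies in the current span (`2^ω` choices) or raises
its dimension by one (`2^η - 2^ω` choices); `2^{kη} ζ(η, ω, k)` satisfies the same recursion in `k`,
because splitting nondecreasing tuples by whether their first entry is `0` gives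
`S(ω+1, l+1) = S(ω+1, l) + 2^{-(l+1)} S(ω, l+1)`.
-/

open Finset Submodule Module

lemma natCard_subtype_fin_succ {V : Type*} [Fintype V] (k : ℕ) (P : (Fin (k + 1) → V) → Prop) :
    Nat.card {T : Fin (k + 1) → V // P T}
      = ∑ T' : Fin k → V, Nat.card {v : V // P (Fin.cons v T')} := by
  rw [← Nat.card_sigma, Nat.card_congr ((Equiv.subtypeProdEquivSigmaSubtype
    fun T' v => P (Fin.cons v T')).symm.trans (Equiv.subtypeEquiv
      ((Equiv.prodComm _ _).trans (Fin.consEquiv fun _ => V)) fun _ => Iff.rfl))]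

lemma AddMonoidHom.natCard_subtype_comp {G H : Type*} [AddGroup G] [AddGroup H] [Finite G]
    {f : G →+ H} (hf : Function.Surjective f) (P : H → Prop) :
    Nat.card {g // P (f g)} = Nat.card f.ker * Nat.card {h // P h} := by
  have := Finite.of_surjective f hf
  have := Fintype.ofFinite {h // P h}
  rw [← Nat.card_congr (Equiv.sigmaSubtypeFiberEquivSubtype f fun _ => Iff.rfl), Nat.card_sigma,
    sum_congr rfl fun (h : {h // P h}) _ => (show Nat.card {g // f g = h} = Nat.card f.ker from
      Nat.card_congr (f.fiberEquivKerOfSurjective hf h)), sum_const,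
    card_univ, smul_eq_mul, mul_comm, ← Nat.card_eq_fintype_card]

lemma AddMonoidHom.natCard_subtype_comp_div_natCard {G H : Type*} [AddGroup G] [AddGroup H]
    [Finite G] {f : G →+ H} (hf : Function.Surjective f) (P : H → Prop) :
    (Nat.card {g // P (f g)} : ℝ) / Nat.card G = Nat.card {h // P h} / Nat.card H := by
  have hG := natCard_subtype_comp hf fun _ => True
  rw [Nat.card_congr (Equiv.subtypeUnivEquiv fun _ => trivial),
    Nat.card_congr (Equiv.subtypeUnivEquiv fun _ => trivial)] at hG
  have hker : (Nat.card f.ker : ℝ) ≠ 0 := Nat.cast_ne_zero.mpr Nat.card_pos.ne'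
  rw [natCard_subtype_comp hf, hG, Nat.cast_mul, Nat.cast_mul, mul_div_mul_left _ _ hker]

lemma Submodule.finrank_sup_eq_finrank_add_finrank_map_mkQ {K V : Type*} [Field K]
    [AddCommGroup V] [Module K V] [FiniteDimensional K V] (W U : Submodule K V) :
    finrank K ↥(W ⊔ U) = finrank K W + finrank K (U.map W.mkQ) := by
  have hrange : LinearMap.range (W.mkQ.domRestrict (W ⊔ U)) = U.map W.mkQ := by
    rw [LinearMap.range_domRestrict, map_sup, mkQ_map_self, bot_sup_eq]
  have hker : finrank K (LinearMap.ker (W.mkQ.domRestrict (W ⊔ U))) = finrank K W := by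
    rw [LinearMap.ker_domRestrict, ker_mkQ]
    exact (comapSubtypeEquivOfLe le_sup_left).finrank_eq
  have := LinearMap.finrank_range_add_finrank_ker (W.mkQ.domRestrict (W ⊔ U))
  rw [hrange, hker] at this
  omega

lemma Matrix.rank_fromRows_eq_add_finrank_span_mkQ {m₁ m₂ n K : Type*} [Finite m₁] [Finite m₂]
    [Fintype n] [Field K] (A : Matrix m₁ n K) (B : Matrix m₂ n K) :
    (fromRows A B).rank
      = A.rank + finrank K (span K (Set.range fun i => (span K (Set.range A.row)).mkQ (B i))) := by
  rw [rank_eq_finrank_span_row, rank_eq_finrank_span_row,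
    show (fromRows A B).row = Sum.elim A.row B.row from rfl, Set.Sum.elim_range, span_union,
    finrank_sup_eq_finrank_add_finrank_map_mkQ, map_span, ← Set.range_comp]
  rfl

section SpanRankCount

variable (K V : Type*) [Field K] [AddCommGroup V] [Module K V]

noncomputable def spanRankCount (k ω : ℕ) : ℕ :=
  Nat.card {T : Fin k → V // finrank K (span K (Set.range T)) = ω}

lemma spanRankCount_of_lt {k ω : ℕ} (h : k < ω) : spanRankCount K V k ω = 0 := by
  rw [spanRankCount, Nat.card_eq_zero]
  refine Or.inl ⟨fun ⟨T, hT⟩ => ?_⟩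
  have := finrank_range_le_card (R := K) T
  simp only [Set.finrank, Fintype.card_fin] at this
  omega

variable [Fintype V]

lemma spanRankCount_zero_right (k : ℕ) : spanRankCount K V k 0 = 1 := by
  have hzero (T : Fin k → V) : finrank K (span K (Set.range T)) = 0 ↔ T = 0 := by
    rw [Submodule.finrank_eq_zero, span_eq_bot, Set.forall_mem_range, funext_iff]
    rfl
  rw [spanRankCount, Nat.card_congr (Equiv.subtypeEquivRight hzero), Nat.card_unique]

variable {K V} [Fintype K]

lemma natCard_finrank_sup_span_singleton (s : Submodule K V) (ω : ℕ) :
    Nat.card {v : V // finrank K ↥(s ⊔ span K {v}) = ω + 1}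
      = (if finrank K s = ω + 1 then Fintype.card K ^ (ω + 1) else 0)
        + (if finrank K s = ω then Fintype.card K ^ finrank K V - Fintype.card K ^ ω else 0) := by
  classical
  have hrank (v : V) :
      finrank K ↥(s ⊔ span K {v}) = if v ∈ s then finrank K s else finrank K s + 1 := by
    split_ifs with hv
    · rw [sup_eq_left.mpr ((span_singleton_le_iff_mem _ _).mpr hv)]
    · exact finrank_sup_span_singleton hv
  have hcard : Fintype.card s = Fintype.card K ^ finrank K s := card_eq_pow_finrank
  rw [Nat.card_congr (Equiv.subtypeEquivRight fun v => by rw [hrank])]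
  by_cases h1 : finrank K s = ω + 1
  · rw [if_pos h1, if_neg (by omega), add_zero, ← h1, ← hcard, ← Nat.card_eq_fintype_card]
    exact Nat.card_congr (Equiv.subtypeEquivRight fun v => by split_ifs <;> simp_all)
  by_cases h2 : finrank K s = ω
  · rw [if_neg h1, if_pos h2, zero_add, ← h2, ← hcard, ← card_eq_pow_finrank,
      ← Fintype.card_subtype_compl, ← Nat.card_eq_fintype_card]
    exact Nat.card_congr (Equiv.subtypeEquivRight fun v => by split_ifs <;> simp_all)
  · rw [if_neg h1, if_neg h2, Nat.card_eq_zero]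
    exact Or.inl ⟨fun ⟨v, hv⟩ => by split_ifs at hv <;> omega⟩

variable (K V)

lemma spanRankCount_succ_succ (k ω : ℕ) :
    spanRankCount K V (k + 1) (ω + 1)
      = Fintype.card K ^ (ω + 1) * spanRankCount K V k (ω + 1)
        + (Fintype.card K ^ finrank K V - Fintype.card K ^ ω) * spanRankCount K V k ω := by
  have hsummand (T' : Fin k → V) :
      Nat.card {v // finrank K (span K (Set.range (Fin.cons v T' : Fin (k + 1) → V))) = ω + 1}
        = (if finrank K (span K (Set.range T')) = ω + 1 then Fintype.card K ^ (ω + 1) else 0)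
          + (if finrank K (span K (Set.range T')) = ω
              then Fintype.card K ^ finrank K V - Fintype.card K ^ ω else 0) := by
    rw [← natCard_finrank_sup_span_singleton]
    exact Nat.card_congr (Equiv.subtypeEquivRight fun v => by
      rw [Fin.range_cons, span_insert, sup_comm])
  rw [spanRankCount, natCard_subtype_fin_succ, sum_congr rfl fun T' _ => hsummand T',
    sum_add_distrib, ← sum_filter, ← sum_filter, sum_const, sum_const, smul_eq_mul, smul_eq_mul,
    spanRankCount, spanRankCount, Nat.card_eq_fintype_card, Nat.card_eq_fintype_card,
    Fintype.card_subtype, Fintype.card_subtype, mul_comm, mul_comm (_ - _)]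

end SpanRankCount

lemma S_zero_right (ω : ℕ) : S ω 0 = 1 := by
  simp [S, Subsingleton.monotone]

lemma S_zero_left (l : ℕ) : S 0 l = 1 := by
  have hmono (f : Fin l → Fin 1) : Monotone f := fun _ _ _ => (Subsingleton.elim _ _).le
  simp [S, hmono]

lemma sum_monotone_head_eq_zero (ω l : ℕ) :
    ∑ f ∈ univ.filter (fun f : Fin (l + 1) → Fin (ω + 2) => Monotone f ∧ f 0 = 0),
      (1 / 2 : ℝ) ^ (∑ i, (f i : ℕ)) = S (ω + 1) l := by
  refine sum_nbij' Fin.tail (fun g => Fin.cons 0 g) ?_ ?_ ?_ ?_ ?_ <;>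
    simp only [mem_filter, mem_univ, true_and]
  · exact fun f hf => hf.1.comp Fin.strictMono_succ.monotone
  · refine fun g hg => ⟨fun a b hab => ?_, Fin.cons_zero _ _⟩
    cases a using Fin.cases with
    | zero => exact Fin.zero_le _
    | succ a =>
      obtain ⟨b, rfl⟩ := Fin.exists_succ_eq.mpr (lt_of_lt_of_le (Fin.succ_pos a) hab).ne'
      simpa using hg (Fin.succ_le_succ_iff.mp hab)
  · exact fun f hf => by rw [← hf.2, Fin.cons_self_tail]
  · exact fun g _ => Fin.tail_cons _ _
  · exact fun f hf => by simp [Fin.sum_univ_succ, hf.2, Fin.tail]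

lemma sum_monotone_head_ne_zero (ω l : ℕ) :
    ∑ f ∈ univ.filter (fun f : Fin (l + 1) → Fin (ω + 2) => Monotone f ∧ ¬ f 0 = 0),
      (1 / 2 : ℝ) ^ (∑ i, (f i : ℕ)) = (1 / 2 : ℝ) ^ (l + 1) * S ω (l + 1) := by
  have hpos : ∀ f : Fin (l + 1) → Fin (ω + 2), Monotone f ∧ ¬ f 0 = 0 → ∀ i, 0 < (f i : ℕ) :=
    fun f hf i => lt_of_lt_of_le (Fin.pos_iff_ne_zero.mpr hf.2) (hf.1 (Fin.zero_le i))
  rw [S, mul_sum]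
  refine sum_nbij' (fun f i => ⟨f i - 1, by omega⟩) (fun g i => (g i).succ) ?_ ?_ ?_ ?_ ?_ <;>
    simp only [mem_filter, mem_univ, true_and]
  · intro f hf a b hab
    have := Fin.le_def.mp (hf.1 hab)
    simp only [Fin.mk_le_mk]
    omega
  · exact fun g hg => ⟨fun a b hab => Fin.succ_le_succ_iff.mpr (hg hab), Fin.succ_ne_zero _⟩
  · intro f hf
    funext i
    have := hpos f hf i
    ext
    simp only [Fin.val_succ]
    omega
  · exact fun g _ => funext fun i => Fin.ext (by simp)
  · intro f hf
    have hsum : ∑ i, (f i : ℕ) = ∑ i, ((f i : ℕ) - 1 + 1) :=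
      sum_congr rfl fun i _ => by have := hpos f hf i; omega
    rw [hsum, sum_add_distrib, sum_const, card_univ, Fintype.card_fin, smul_eq_mul, mul_one,
      pow_add, mul_comm]

lemma S_succ_succ (ω l : ℕ) :
    S (ω + 1) (l + 1) = S (ω + 1) l + (1 / 2 : ℝ) ^ (l + 1) * S ω (l + 1) := by
  rw [← sum_monotone_head_eq_zero ω l, ← sum_monotone_head_ne_zero ω l, S]
  convert (sum_filter_add_sum_filter_not _ (fun f : Fin (l + 1) → Fin (ω + 2) => f 0 = 0) _).symm
    using 2 <;> rw [filter_filter]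

lemma zeta_zero (η k : ℕ) : zeta η 0 k = (1 / 2 : ℝ) ^ (k * η) := by
  simp [zeta, S_zero_left]

lemma two_pow_mul_zeta_succ_succ {η ω k : ℕ} (hk : ω + 1 ≤ k) (hη : ω + 1 ≤ η) :
    2 ^ η * zeta η (ω + 1) (k + 1)
      = 2 ^ (ω + 1) * zeta η (ω + 1) k + (2 ^ η - 2 ^ ω) * zeta η ω k := by
  obtain ⟨a, rfl⟩ := Nat.exists_eq_add_of_le hη
  obtain ⟨b, rfl⟩ := Nat.exists_eq_add_of_le hk
  rw [zeta, zeta, zeta, prod_Icc_succ_top (by omega),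
    show ω + 1 + b + 1 - (ω + 1) = b + 1 by omega, show ω + 1 + b - (ω + 1) = b by omega,
    show ω + 1 + b - ω = b + 1 by omega, show ω + 1 + a - (ω + 1) = a by omega,
    show ω + 1 + a - ω = a + 1 by omega, show ω + 1 + a + 1 - (ω + 1) = a + 1 by omega,
    S_succ_succ, show (b + 1) * (a + 1) = b * a + a + (b + 1) by ring,
    show (b + 1) * a = b * a + a by ring]
  generalize ∏ i ∈ Icc 1 ω, (1 - (1 / 2 : ℝ) ^ (ω + 1 + a + 1 - i)) = P
  simp only [one_div, inv_pow, pow_add, pow_one]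
  field_simp

-- Separate from the off-diagonal step because `zeta η (k + 1) k` is a junk value
-- (`k - (k + 1) = 0` in `ℕ`), not `0`.
lemma two_pow_mul_zeta_succ_self {η k : ℕ} (hη : k + 1 ≤ η) :
    2 ^ η * zeta η (k + 1) (k + 1) = (2 ^ η - 2 ^ k) * zeta η k k := by
  obtain ⟨a, rfl⟩ := Nat.exists_eq_add_of_le hη
  rw [zeta, zeta, prod_Icc_succ_top (by omega), show k + 1 + a + 1 - (k + 1) = a + 1 by omega]
  generalize ∏ i ∈ Icc 1 k, (1 - (1 / 2 : ℝ) ^ (k + 1 + a + 1 - i)) = P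
  simp only [Nat.sub_self, S_zero_right, zero_mul, pow_zero, one_div, inv_pow, pow_add, pow_one]
  field_simp

lemma spanRankCount_eq_two_pow_mul_zeta {V : Type*} [AddCommGroup V] [Module (ZMod 2) V]
    [Fintype V] {k ω : ℕ} (hωη : ω ≤ finrank (ZMod 2) V) (hωk : ω ≤ k) :
    (spanRankCount (ZMod 2) V k ω : ℝ)
      = 2 ^ (k * finrank (ZMod 2) V) * zeta (finrank (ZMod 2) V) ω k := by
  set η := finrank (ZMod 2) V
  induction k generalizing ω with
  | zero =>
    obtain rfl : ω = 0 := by omega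
    simp [spanRankCount_zero_right, zeta_zero]
  | succ k ih =>
    rcases ω with _ | ω
    · simp [spanRankCount_zero_right, zeta_zero]
    have hcast : (spanRankCount (ZMod 2) V (k + 1) (ω + 1) : ℝ)
        = 2 ^ (ω + 1) * spanRankCount (ZMod 2) V k (ω + 1)
          + (2 ^ η - 2 ^ ω) * spanRankCount (ZMod 2) V k ω := by
      rw [spanRankCount_succ_succ, ZMod.card, Nat.cast_add, Nat.cast_mul, Nat.cast_mul,
        Nat.cast_sub (Nat.pow_le_pow_right two_pos (by omega))]
      push_cast
      rfl
    rw [hcast, show (k + 1) * η = k * η + η by ring, pow_add]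
    rcases Nat.lt_or_ge ω k with hlt | hge
    · rw [ih hlt (by omega), ih (by omega) (by omega)]
      linear_combination (-2 ^ (k * η) : ℝ) * two_pow_mul_zeta_succ_succ hlt hωη
    · obtain rfl : ω = k := by omega
      rw [spanRankCount_of_lt _ _ (Nat.lt_succ_self ω), ih le_rfl (by omega)]
      linear_combination (-2 ^ (ω * η) : ℝ) * two_pow_mul_zeta_succ_self hωη

/-- Appending `k` i.i.d. uniform rows from `F₂ⁿ` to a fixed matrix `H̃` of rank `n − η`,
the probability (uniform counting over all `2^{kn}` choices of the new rows) that the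
resulting matrix has rank `(n − η) + ω` equals `ζ(η,ω,k)`. -/
theorem stmt_4 (n m₀ η k ω : ℕ) (hη : η ≤ n) (hωη : ω ≤ η) (hωk : ω ≤ k)
    (Ht : Matrix (Fin m₀) (Fin n) (ZMod 2)) (hrank : Ht.rank = n - η) :
    (Nat.card {R : Fin k → Fin n → ZMod 2 //
        (Matrix.fromRows Ht (Matrix.of R)).rank = (n - η) + ω} : ℝ) / 2 ^ (k * n)
      = zeta η ω k := by
  set W := span (ZMod 2) (Set.range Ht.row)
  have hquot : finrank (ZMod 2) ((Fin n → ZMod 2) ⧸ W) = η := by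
    have := W.finrank_quotient_add_finrank
    rw [finrank_fin_fun, ← Matrix.rank_eq_finrank_span_row, hrank] at this
    omega
  let f := (W.mkQ.compLeft (Fin k)).toAddMonoidHom
  have hf : Function.Surjective f := W.mkQ_surjective.comp_left
  have hcond (R : Fin k → Fin n → ZMod 2) : (Matrix.fromRows Ht (Matrix.of R)).rank = n - η + ω
      ↔ finrank (ZMod 2) (span (ZMod 2) (Set.range (f R))) = ω := by
    rw [Matrix.rank_fromRows_eq_add_finrank_span_mkQ, hrank, add_right_inj]
    rfl
  have hcard : (Nat.card (Fin k → Fin n → ZMod 2) : ℝ) = 2 ^ (k * n) := by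
    simp [← pow_mul, mul_comm]
  have hcard' : (Nat.card (Fin k → (Fin n → ZMod 2) ⧸ W) : ℝ) = 2 ^ (k * η) := by
    rw [Nat.card_fun, natCard_eq_pow_finrank (K := ZMod 2), hquot]
    simp [← pow_mul, mul_comm]
  rw [Nat.card_congr (Equiv.subtypeEquivRight hcond), ← hcard,
    f.natCard_subtype_comp_div_natCard hf fun T =>
      finrank (ZMod 2) (span (ZMod 2) (Set.range T)) = ω, hcard']
  have := Fintype.ofFinite ((Fin n → ZMod 2) ⧸ W)
  rw [← spanRankCount, spanRankCount_eq_two_pow_mul_zeta (hquot ▸ hωη) hωk, hquot]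
  field_simp
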